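/- arXiv:1908.10185 — 4 statements merged into one kernel-verified Lean document; each statement's English description precedes it below -/
import Mathlib

section
/- Let I be an 𝔪-primary monomial ideal in K[x_1,…,x_n]. The following are equivalent: (1) I is good; (2) for every l ≥ 1 and every monomial m ∈ I^l there exist nonnegative integers a_1,…,a_n such that m lies in the box B_{a_1,…,a_n} and a_1+⋯+a_n ≥ l−1; (3) for every l ≥ 1 and all m_1,…,m_l ∈ G(I) there exist nonnegative integers a_1,…,a_n such that the product m_1⋯m_l lies in the box B_{a_1,…,a_n} and a_1+⋯+a_n ≥ l−1. -/
open MvPolynomial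

namespace GasanovaRR

/-- The monomial `x^α` in `K[x_1,…,x_n]`. -/
noncomputable def mono (K : Type*) [Field K] {n : ℕ} (α : Fin n → ℕ) :
    MvPolynomial (Fin n) K :=
  MvPolynomial.monomial (Finsupp.equivFunOnFinite.symm α) 1

/-- `I` is a monomial ideal: it is generated by a set of monomials. -/
def IsMonomialIdeal {K : Type*} [Field K] {n : ℕ}
    (I : Ideal (MvPolynomial (Fin n) K)) : Prop :=
  ∃ A : Set (Fin n → ℕ), I = Ideal.span (mono K '' A)

/-- `x^α` is a minimal monomial generator of `I`, i.e. `x^α ∈ G(I)`: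
`x^α ∈ I` and no monomial in `I` strictly divides it. -/
def IsMinGen {K : Type*} [Field K] {n : ℕ}
    (I : Ideal (MvPolynomial (Fin n) K)) (α : Fin n → ℕ) : Prop :=
  mono K α ∈ I ∧ ∀ β : Fin n → ℕ, mono K β ∈ I → β ≤ α → β = α

/-- The point `α` lies in the box `B_{a_1,…,a_n}` (for box sizes `d_1,…,d_n`). -/
def InBox {n : ℕ} (d a α : Fin n → ℕ) : Prop :=
  ∀ i, a i * d i ≤ α i ∧ α i ≤ (a i + 1) * d i

/-- `I` is a good ideal (w.r.t. box sizes `d`): for every `l ≥ 1`, every minimal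
generator of `I^l` lies in a box whose coordinate sum is `l - 1`. -/
def IsGood {K : Type*} [Field K] {n : ℕ}
    (I : Ideal (MvPolynomial (Fin n) K)) (d : Fin n → ℕ) : Prop :=
  ∀ l : ℕ, 1 ≤ l → ∀ α : Fin n → ℕ, IsMinGen (I ^ l) α →
    ∃ a : Fin n → ℕ, InBox d a α ∧ ∑ i, a i = l - 1

/-- `I` is an `𝔪`-primary monomial ideal whose minimal generating set contains
`μ_i = x_i^{d_i}` with `d_i > 0` for each `i`. -/
def MPrimaryWithCorners {K : Type*} [Field K] {n : ℕ}
    (I : Ideal (MvPolynomial (Fin n) K)) (d : Fin n → ℕ) : Prop :=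
  IsMonomialIdeal I ∧ I ≠ ⊤ ∧ (∀ i, 0 < d i) ∧ ∀ i, IsMinGen I (Pi.single i (d i))

/-- The ideal `I_{a_1,…,a_n}` associated to the box `B_{a_1,…,a_n}`, generated by
`m / (μ_1^{a_1}⋯μ_n^{a_n})` for `m ∈ B_{a_1,…,a_n} ∩ G(I^l)`, `l = a_1+⋯+a_n+1`. -/
noncomputable def boxIdeal {K : Type*} [Field K] {n : ℕ}
    (I : Ideal (MvPolynomial (Fin n) K)) (d a : Fin n → ℕ) :
    Ideal (MvPolynomial (Fin n) K) :=
  Ideal.span ((fun α => mono K (α - fun i => a i * d i)) ''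
    {α | InBox d a α ∧ IsMinGen (I ^ (∑ i, a i + 1)) α})

/-- The Ratliff–Rush closure `Ĩ = ⋃_{k ≥ 0} (I^{k+1} : I^k)`. -/
noncomputable def ratliffRush {K : Type*} [Field K] {n : ℕ}
    (I : Ideal (MvPolynomial (Fin n) K)) : Ideal (MvPolynomial (Fin n) K) :=
  ⨆ k : ℕ, (I ^ (k + 1)).colon ((I ^ k : Ideal (MvPolynomial (Fin n) K)) : Set (MvPolynomial (Fin n) K))

/-- The cone in `ℕ^n` with set `S` of fixed coordinates and vertex `v`. -/
def Cone {n : ℕ} (S : Set (Fin n)) (v : Fin n → ℕ) : Set (Fin n → ℕ) :=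
  {b | (∀ i ∈ S, b i = v i) ∧ ∀ i ∉ S, v i ≤ b i}

/-- `I` is a very good ideal: it is good and `I_{a_1,…,a_n} = I` for all boxes. -/
def IsVeryGood {K : Type*} [Field K] {n : ℕ}
    (I : Ideal (MvPolynomial (Fin n) K)) (d : Fin n → ℕ) : Prop :=
  IsGood I d ∧ ∀ a : Fin n → ℕ, boxIdeal I d a = I

/-!
(1) ⇒ (2): a monomial `x^α ∈ I^l` is divisible by a minimal generator of `I^l`, and the box
`⌊α / d⌋` containing `α` lies coordinatewise above the box of that divisor.
(2) ⇒ (3): a product of `l` generators of `I` lies in `I^l`.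
(3) ⇒ (1): a minimal generator `x^α` of `I^l` is a product of `l` minimal generators of `I`, so it
lies in a box `a` with `∑ a ≥ l - 1`. If `∑ a ≥ l`, the lower corner of that box dominates a
product of corners `μ^c` with `∑ c = l`; this lies in `I^l`, so minimality forces `α = c * d`,
a point that also lies on the upper face of a box with coordinate sum `l - 1`.
-/

section Boxes

variable {n : ℕ}

lemma exists_le_sum_eq {ι : Type*} [Fintype ι] (a : ι → ℕ) {k : ℕ} (hk : k ≤ ∑ i, a i) :
    ∃ c ≤ a, ∑ i, c i = k := by
  classical
  induction k with
  | zero => exact ⟨0, fun i => Nat.zero_le _, by simp⟩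
  | succ k ih =>
    obtain ⟨c, hca, hc⟩ := ih (by omega)
    obtain ⟨i, -, hi⟩ := Finset.exists_lt_of_sum_lt (s := Finset.univ) (f := c) (g := a) (by omega)
    refine ⟨c + Pi.single i 1, fun j => ?_, by simp [Finset.sum_add_distrib, hc]⟩
    by_cases hj : j = i
    · subst hj; simpa using hi
    · simpa [hj] using hca j

lemma inBox_div {d : Fin n → ℕ} (hd : ∀ i, 0 < d i) (α : Fin n → ℕ) : InBox d (α / d) α :=
  fun i => ⟨Nat.div_mul_le_self _ _,
    (Nat.lt_div_mul_add (hd i)).le.trans_eq (by rw [Pi.div_apply]; ring)⟩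

lemma InBox.le_div {d a α β : Fin n → ℕ} (hd : ∀ i, 0 < d i) (h : InBox d a β) (hβα : β ≤ α) :
    a ≤ α / d :=
  fun i => (Nat.le_div_iff_mul_le (hd i)).2 ((h i).1.trans (hβα i))

lemma exists_inBox_mul_sum_eq {c : Fin n → ℕ} (d : Fin n → ℕ) {k : ℕ} (hc : ∑ i, c i = k + 1) :
    ∃ a, InBox d a (c * d) ∧ ∑ i, a i = k := by
  obtain ⟨i, -, hi⟩ := Finset.exists_ne_zero_of_sum_ne_zero (by omega : ∑ i, c i ≠ 0)
  set a := c - Pi.single i 1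
  have hca : c = a + Pi.single i 1 := by
    ext j
    by_cases hj : j = i
    · subst hj; simp [a]; omega
    · simp [a, hj]
  refine ⟨a, fun j => ?_, ?_⟩
  · have hs : (Pi.single i 1 : Fin n → ℕ) j ≤ 1 := by by_cases hj : j = i <;> simp [hj]
    rw [hca, Pi.mul_apply, Pi.add_apply]
    exact ⟨Nat.mul_le_mul_right _ (by omega), Nat.mul_le_mul_right _ (by omega)⟩
  · have := congrArg (fun f => ∑ j, f j) hca
    simp only [Pi.add_apply, Finset.sum_add_distrib, Finset.sum_pi_single', Finset.mem_univ,
      if_true] at this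
    omega

end Boxes

section Monomials

variable {K : Type*} [Field K] {n : ℕ}

lemma mono_sum {ι : Type*} (s : Finset ι) (f : ι → Fin n → ℕ) :
    mono K (∑ j ∈ s, f j) = ∏ j ∈ s, mono K (f j) := by
  have : Finsupp.equivFunOnFinite.symm (∑ j ∈ s, f j) =
      ∑ j ∈ s, Finsupp.equivFunOnFinite.symm (f j) := by
    ext; simp [Finsupp.finsetSum_apply]
  rw [mono, this, monomial_sum_one]
  rfl

lemma mono_nsmul (k : ℕ) (α : Fin n → ℕ) : mono K (k • α) = mono K α ^ k := by
  simpa using mono_sum (K := K) (n := n) (Finset.range k) fun _ => α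

lemma isMinGen_iff_minimal (J : Ideal (MvPolynomial (Fin n) K)) (α : Fin n → ℕ) :
    IsMinGen J α ↔ Minimal (fun β => mono K β ∈ J) α :=
  and_congr_right fun _ => forall₂_congr fun _ _ =>
    ⟨fun h hle => (h hle).ge, fun h hle => le_antisymm hle (h hle)⟩

lemma exists_isMinGen_le {J : Ideal (MvPolynomial (Fin n) K)} {α : Fin n → ℕ}
    (h : mono K α ∈ J) : ∃ β ≤ α, IsMinGen J β := by
  simpa only [isMinGen_iff_minimal] using exists_minimal_le_of_wellFoundedLT _ α h

lemma mono_mem_span_mono_iff (A : Set (Fin n → ℕ)) (α : Fin n → ℕ) :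
    mono K α ∈ Ideal.span (mono K '' A) ↔ ∃ β ∈ A, β ≤ α := by
  classical
  rw [show mono K '' A = (fun s => monomial s (1 : K)) '' (Finsupp.equivFunOnFinite.symm '' A)
    from (Set.image_image (fun s => monomial s (1 : K)) _ A).symm, mem_ideal_span_monomial_image,
    mono, support_monomial, if_neg one_ne_zero]
  simp only [Finset.mem_singleton, forall_eq, Set.mem_image, exists_exists_and_eq_and,
    Finsupp.le_def, Pi.le_def]
  rfl

lemma span_mono_pow (A : Set (Fin n → ℕ)) (l : ℕ) :
    Ideal.span (mono K '' A) ^ l =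
      Ideal.span (mono K '' {β | ∃ m : Fin l → Fin n → ℕ, (∀ j, m j ∈ A) ∧ ∑ j, m j = β}) := by
  rw [← Ideal.submodule_span_eq, Submodule.span_pow, Ideal.submodule_span_eq]
  congr 1
  ext p
  simp only [Set.mem_pow, List.prod_ofFn, Set.mem_image, Set.mem_ofPred_eq]
  constructor
  · rintro ⟨f, rfl⟩
    choose m hmA hm using fun j => (f j).2
    exact ⟨_, ⟨m, hmA, rfl⟩, by simp only [mono_sum, hm]⟩
  · rintro ⟨_, ⟨m, hmA, rfl⟩, rfl⟩
    exact ⟨fun j => ⟨mono K (m j), m j, hmA j, rfl⟩, (mono_sum _ _).symm⟩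

lemma sum_mono_mem_pow {I : Ideal (MvPolynomial (Fin n) K)} {l : ℕ}
    {m : Fin l → Fin n → ℕ} (h : ∀ j, mono K (m j) ∈ I) :
    mono K (∑ j, m j) ∈ I ^ l := by
  simpa [mono_sum] using Ideal.prod_mem_prod (s := Finset.univ) (I := fun _ => I) fun j _ => h j

lemma exists_sum_le_of_mono_mem_pow {I : Ideal (MvPolynomial (Fin n) K)}
    (hI : IsMonomialIdeal I) {l : ℕ} {α : Fin n → ℕ} (h : mono K α ∈ I ^ l) :
    ∃ m : Fin l → Fin n → ℕ, (∀ j, mono K (m j) ∈ I) ∧ ∑ j, m j ≤ α := by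
  obtain ⟨A, rfl⟩ := hI
  rw [span_mono_pow, mono_mem_span_mono_iff] at h
  obtain ⟨_, ⟨m, hmA, rfl⟩, hle⟩ := h
  exact ⟨m, fun j => Ideal.subset_span (Set.mem_image_of_mem _ (hmA j)), hle⟩

lemma exists_isMinGen_sum_eq {I : Ideal (MvPolynomial (Fin n) K)} (hI : IsMonomialIdeal I)
    {l : ℕ} {α : Fin n → ℕ} (hα : IsMinGen (I ^ l) α) :
    ∃ m : Fin l → Fin n → ℕ, (∀ j, IsMinGen I (m j)) ∧ ∑ j, m j = α := by
  obtain ⟨m, hmI, hmα⟩ := exists_sum_le_of_mono_mem_pow hI hα.1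
  choose m' hm'm hm' using fun j => exists_isMinGen_le (hmI j)
  refine ⟨m', hm', hα.2 _ (sum_mono_mem_pow fun j => (hm' j).1) ?_⟩
  exact (Finset.sum_le_sum fun j _ => hm'm j).trans hmα

lemma mul_mono_mem_pow {I : Ideal (MvPolynomial (Fin n) K)} {d : Fin n → ℕ}
    (hμ : ∀ i, mono K (Pi.single i (d i)) ∈ I) (a : Fin n → ℕ) :
    mono K (a * d) ∈ I ^ ∑ i, a i := by
  have hsum : a * d = ∑ i, a i • Pi.single i (d i) := by
    ext j
    simp [Finset.sum_apply, Pi.single_apply]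
  rw [hsum, mono_sum, ← Finset.prod_pow_eq_pow_sum]
  exact Ideal.prod_mem_prod fun i _ => by
    rw [mono_nsmul]; exact Ideal.pow_mem_pow (hμ i) _

lemma IsMinGen.exists_eq_mul_of_inBox {I : Ideal (MvPolynomial (Fin n) K)} {d : Fin n → ℕ}
    (hμ : ∀ i, mono K (Pi.single i (d i)) ∈ I) {l : ℕ} {α a : Fin n → ℕ}
    (hα : IsMinGen (I ^ l) α) (ha : InBox d a α) (hla : l ≤ ∑ i, a i) :
    ∃ c, ∑ i, c i = l ∧ c * d = α := by
  obtain ⟨c, hca, hc⟩ := exists_le_sum_eq a hla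
  refine ⟨c, hc, hα.2 _ (hc ▸ mul_mono_mem_pow hμ c) fun i => ?_⟩
  exact (Nat.mul_le_mul_right _ (hca i)).trans (ha i).1

end Monomials


/-- Proposition 3.5: for an `𝔪`-primary monomial ideal `I`, the following are
equivalent: (1) `I` is good; (2) every monomial in `I^l` (`l ≥ 1`) lies in a box
with coordinate sum `≥ l - 1`; (3) every product of `l` minimal generators of `I`
lies in a box with coordinate sum `≥ l - 1`. -/
theorem good_tfae {K : Type*} [Field K] {n : ℕ}
    (I : Ideal (MvPolynomial (Fin n) K)) (d : Fin n → ℕ)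
    (hI : MPrimaryWithCorners I d) :
    List.TFAE
      [IsGood I d,
       ∀ l : ℕ, 1 ≤ l → ∀ α : Fin n → ℕ, mono K α ∈ I ^ l →
         ∃ a : Fin n → ℕ, InBox d a α ∧ l - 1 ≤ ∑ i, a i,
       ∀ l : ℕ, 1 ≤ l → ∀ m : Fin l → (Fin n → ℕ), (∀ j, IsMinGen I (m j)) →
         ∃ a : Fin n → ℕ, InBox d a (∑ j, m j) ∧ l - 1 ≤ ∑ i, a i] := by
  obtain ⟨hmono, -, hd, hμ⟩ := hI
  tfae_have 1 → 2 := by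
    intro hgood l hl α hα
    obtain ⟨β, hβα, hβ⟩ := exists_isMinGen_le hα
    obtain ⟨b, hb, hsum⟩ := hgood l hl β hβ
    exact ⟨α / d, inBox_div hd α, hsum ▸ Finset.sum_le_sum fun i _ => hb.le_div hd hβα i⟩
  tfae_have 2 → 3 := fun h l hl m hm => h l hl _ (sum_mono_mem_pow fun j => (hm j).1)
  tfae_have 3 → 1 := by
    intro h l hl α hα
    obtain ⟨m, hm, rfl⟩ := exists_isMinGen_sum_eq hmono hα
    obtain ⟨a, ha, hla⟩ := h l hl m hm
    rcases hla.eq_or_lt with hla | hla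
    · exact ⟨a, ha, hla.symm⟩
    · obtain ⟨c, hc, hcα⟩ := hα.exists_eq_mul_of_inBox (fun i => (hμ i).1) ha (by omega)
      rw [← hcα]
      exact exists_inBox_mul_sum_eq d (by omega)
  tfae_finish

end GasanovaRR
end

section
/- Given any cone C in ℕ^n of dimension k and any point a ∈ C, the cone C can be decomposed into a disjoint union of finitely many cones, exactly one of which has dimension k and vertex a, while all the others have dimension strictly less than k. -/
/-!
For `b ∈ Cone S v` either `b ≥ a` on all free coordinates, i.e. `b ∈ Cone S a`, or there is a
first free coordinate `i` with `b i < a i`. In the second case `b` lies in the cone with `i` also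
fixed at `t = b i`, whose vertex agrees with `a` before `i` and with `v` after it. The pair
`(i, t)` is determined by `b`, so these cones are disjoint, and each has one fixed coordinate more
than `Cone S v`; there are finitely many since `v i ≤ t < a i`.
-/

open MvPolynomial

namespace GasanovaRR

variable {n : ℕ} {S : Finset (Fin n)} {v a b : Fin n → ℕ}

lemma cone_subset_of_mem (ha : a ∈ Cone (↑S) v) : Cone (↑S) a ⊆ Cone (↑S) v :=
  fun _ hb => ⟨fun j hj => (hb.1 j hj).trans (ha.1 j hj),
    fun j hj => (ha.2 j hj).trans (hb.2 j hj)⟩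

lemma mem_cone_iff_of_mem (ha : a ∈ Cone (↑S) v) (hb : b ∈ Cone (↑S) v) :
    b ∈ Cone (↑S) a ↔ ∀ j ∉ S, a j ≤ b j :=
  ⟨fun h => h.2, fun h => ⟨fun j hj => (hb.1 j hj).trans (ha.1 j hj).symm, h⟩⟩

/-- Vertex of the piece of `Cone S v \ Cone S a` made of the points that first drop below `a`
at the free coordinate `i`, where they take the value `t`. -/
def stepVertex (v a : Fin n → ℕ) (i : Fin n) (t : ℕ) : Fin n → ℕ :=
  fun j => if j < i then a j else if j = i then t else v j

lemma mem_cone_stepVertex_iff (ha : a ∈ Cone (↑S) v) {i : Fin n} (hi : i ∉ S) {t : ℕ}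
    (hvt : v i ≤ t) :
    b ∈ Cone (↑(insert i S)) (stepVertex v a i t) ↔
      b ∈ Cone (↑S) v ∧ b i = t ∧ ∀ j ∉ S, j < i → a j ≤ b j := by
  obtain ⟨haS, hav⟩ := ha
  simp only [Cone, stepVertex, Set.mem_ofPred_eq, Finset.coe_insert, Set.mem_insert_iff,
    Finset.mem_coe]
  constructor
  · rintro ⟨hfix, hfree⟩
    refine ⟨⟨fun j hj => ?_, fun j hj => ?_⟩, ?_, fun j hj hji => ?_⟩ <;> grind
  · rintro ⟨⟨hfix, hfree⟩, hbi, hlt⟩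
    refine ⟨fun j hj => ?_, fun j hj => ?_⟩ <;> grind

lemma exists_first_lt_of_notMem_cone (ha : a ∈ Cone (↑S) v) (hb : b ∈ Cone (↑S) v)
    (hba : b ∉ Cone (↑S) a) : ∃ i ∉ S, b i < a i ∧ ∀ j ∉ S, j < i → a j ≤ b j := by
  obtain ⟨j, hjS, hj⟩ : ∃ j ∉ S, b j < a j := by
    simpa [mem_cone_iff_of_mem ha hb] using hba
  obtain ⟨i, ⟨hiS, hi⟩, hmin⟩ :=
    wellFounded_lt.has_min {j | j ∉ S ∧ b j < a j} ⟨j, hjS, hj⟩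
  exact ⟨i, hiS, hi, fun j hjS hji => not_lt.mp fun hj => hmin j ⟨hjS, hj⟩ hji⟩

def coneDecomposition (S : Finset (Fin n)) (v a : Fin n → ℕ) :
    Finset (Finset (Fin n) × (Fin n → ℕ)) :=
  insert (S, a) (Sᶜ.biUnion fun i =>
    (Finset.Ico (v i) (a i)).image fun t => (insert i S, stepVertex v a i t))

lemma mem_coneDecomposition {c : Finset (Fin n) × (Fin n → ℕ)} :
    c ∈ coneDecomposition S v a ↔ c = (S, a) ∨
      ∃ i ∉ S, ∃ t, v i ≤ t ∧ t < a i ∧ c = (insert i S, stepVertex v a i t) := by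
  simp only [coneDecomposition, Finset.mem_insert, Finset.mem_biUnion, Finset.mem_compl,
    Finset.mem_image, Finset.mem_Ico]
  grind

lemma biUnion_cone_coneDecomposition (ha : a ∈ Cone (↑S) v) :
    ⋃ c ∈ coneDecomposition S v a, Cone (↑c.1) c.2 = Cone (↑S) v := by
  ext b
  simp only [Set.mem_iUnion, exists_prop]
  constructor
  · rintro ⟨c, hc, hb⟩
    rcases mem_coneDecomposition.mp hc with rfl | ⟨i, hi, t, hvt, -, rfl⟩
    · exact cone_subset_of_mem ha hb
    · exact ((mem_cone_stepVertex_iff ha hi hvt).mp hb).1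
  · intro hb
    by_cases hba : b ∈ Cone (↑S) a
    · exact ⟨(S, a), mem_coneDecomposition.mpr (.inl rfl), hba⟩
    obtain ⟨i, hi, hlt, hfirst⟩ := exists_first_lt_of_notMem_cone ha hb hba
    exact ⟨(insert i S, stepVertex v a i (b i)),
      mem_coneDecomposition.mpr (.inr ⟨i, hi, b i, hb.2 i hi, hlt, rfl⟩),
      (mem_cone_stepVertex_iff ha hi (hb.2 i hi)).mpr ⟨hb, rfl, hfirst⟩⟩

lemma pairwiseDisjoint_coneDecomposition (ha : a ∈ Cone (↑S) v) :
    (coneDecomposition S v a : Set (Finset (Fin n) × (Fin n → ℕ))).PairwiseDisjoint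
      fun c => Cone (↑c.1) c.2 := by
  intro c hc c' hc' hne
  rw [Function.onFun, Set.disjoint_left]
  intro b hb hb'
  rcases mem_coneDecomposition.mp hc with rfl | ⟨i, hi, t, hvt, hta, rfl⟩ <;>
    rcases mem_coneDecomposition.mp hc' with rfl | ⟨i', hi', t', hvt', hta', rfl⟩
  · exact hne rfl
  · obtain ⟨-, rfl, -⟩ := (mem_cone_stepVertex_iff ha hi' hvt').mp hb'
    exact (hb.2 i' hi').not_gt hta'
  · obtain ⟨-, rfl, -⟩ := (mem_cone_stepVertex_iff ha hi hvt).mp hb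
    exact (hb'.2 i hi).not_gt hta
  · obtain ⟨-, rfl, hfirst⟩ := (mem_cone_stepVertex_iff ha hi hvt).mp hb
    obtain ⟨-, rfl, hfirst'⟩ := (mem_cone_stepVertex_iff ha hi' hvt').mp hb'
    obtain rfl : i = i' := by
      by_contra hii'
      rcases lt_or_gt_of_ne hii' with hlt | hgt
      · exact (hfirst' i hi hlt).not_gt hta
      · exact (hfirst i' hi' hgt).not_gt hta'
    exact hne rfl

lemma card_lt_of_mem_coneDecomposition {c : Finset (Fin n) × (Fin n → ℕ)}
    (hc : c ∈ coneDecomposition S v a) (hne : c ≠ (S, a)) : S.card < c.1.card := by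
  obtain ⟨i, hi, t, -, -, rfl⟩ := mem_coneDecomposition.mp hc |>.resolve_left hne
  exact Finset.card_lt_card (Finset.ssubset_insert hi)

/-- Theorem 5.7: any cone `C` in `ℕ^n` of dimension `k = n - |S|` can, given any
point `a ∈ C`, be decomposed into a disjoint union of finitely many cones, exactly
one of which has dimension `k` and vertex `a`, all others having strictly smaller
dimension. -/
theorem cone_decomposition {n : ℕ} (S : Finset (Fin n)) (v a : Fin n → ℕ)
    (ha : a ∈ Cone (↑S) v) :
    ∃ F : Finset (Finset (Fin n) × (Fin n → ℕ)),
      (⋃ c ∈ F, Cone (↑c.1) c.2) = Cone (↑S) v ∧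
      (∀ c ∈ F, ∀ c' ∈ F, c ≠ c' →
        Disjoint (Cone (↑c.1) c.2) (Cone (↑c'.1) c'.2)) ∧
      ∃ c₀ ∈ F, c₀.2 = a ∧ n - c₀.1.card = n - S.card ∧
        ∀ c ∈ F, c ≠ c₀ → n - c.1.card < n - S.card := by
  refine ⟨coneDecomposition S v a, biUnion_cone_coneDecomposition ha,
    pairwiseDisjoint_coneDecomposition ha, (S, a), mem_coneDecomposition.mpr (.inl rfl), rfl, rfl,
    fun c hc hne => ?_⟩
  have hlt := card_lt_of_mem_coneDecomposition hc hne
  have hle : c.1.card ≤ n := by simpa using Finset.card_le_univ c.1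
  omega

end GasanovaRR
end

section
/- Let I be a good ideal in K[x,y] (two variables). Then for every k ≥ 1 the power I^k is also a good ideal (with respect to its own boxes, of sizes kd_1 and kd_2). -/
open MvPolynomial

namespace GasanovaRR

/-!
A minimal generator of `(I^k)^l = I^(kl)` lies, since `I` is good, in a box `B_a` of `I` with
`a_1 + a_2 = kl - 1`. It then lies in the box `B^k_b` of `I^k` with `b_i = ⌊a_i / k⌋`, and in two
variables the floors still add up correctly: the remainders of `a_1, a_2` mod `k` plus one form a
multiple of `k` strictly between `0` and `2k`, hence equal `k`, so `b_1 + b_2 = l - 1`.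
-/

theorem _root_.Nat.div_add_div_add_one_eq_of_add_add_one_eq_mul {a b k l : ℕ}
    (h : a + b + 1 = k * l) : a / k + b / k + 1 = l := by
  have hk : 0 < k := Nat.pos_of_ne_zero (by rintro rfl; simp at h)
  have ha := Nat.div_add_mod a k
  have hb := Nat.div_add_mod b k
  have hra := Nat.mod_lt a hk
  have hrb := Nat.mod_lt b hk
  have hlt : k * (a / k + b / k) < k * l := by rw [mul_add]; omega
  have hgt : k * l < k * (a / k + b / k + 2) := by rw [mul_add, mul_add]; omega
  have := Nat.lt_of_mul_lt_mul_left hlt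
  have := Nat.lt_of_mul_lt_mul_left hgt
  omega

theorem InBox.div_scale {n k : ℕ} {d a α : Fin n → ℕ} (h : InBox d a α) (hk : 0 < k) :
    InBox (fun i => k * d i) (fun i => a i / k) α := by
  intro i
  obtain ⟨hlow, hupp⟩ := h i
  constructor
  · calc a i / k * (k * d i) = a i / k * k * d i := by ring
      _ ≤ a i * d i := Nat.mul_le_mul_right _ (Nat.div_mul_le_self _ _)
      _ ≤ α i := hlow
  · calc α i ≤ (a i + 1) * d i := hupp
      _ ≤ (a i / k + 1) * k * d i := by
          refine Nat.mul_le_mul_right _ ?_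
          have := Nat.div_add_mod (a i) k
          have := Nat.mod_lt (a i) hk
          rw [add_mul]
          linarith
      _ = (a i / k + 1) * (k * d i) := by ring

theorem power_good_two_vars_general {K : Type*} [Field K]
    (I : Ideal (MvPolynomial (Fin 2) K)) (d : Fin 2 → ℕ)
    (hgood : IsGood I d) :
    ∀ k : ℕ, 1 ≤ k → IsGood (I ^ k) (fun i => k * d i) := by
  intro k hk l hl α hmin
  rw [← pow_mul] at hmin
  obtain ⟨a, hbox, hsum⟩ := hgood (k * l) (Nat.mul_pos hk hl) α hmin
  refine ⟨fun i => a i / k, hbox.div_scale hk, ?_⟩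
  rw [Fin.sum_univ_two] at hsum ⊢
  have hsum' : a 0 + a 1 + 1 = k * l := by have := Nat.mul_pos hk hl; omega
  have := Nat.div_add_div_add_one_eq_of_add_add_one_eq_mul hsum'
  omega

/-- Proposition 10.2: in two variables, every power of a good ideal is good
(w.r.t. its own boxes, of sizes `k·d_1`, `k·d_2`). -/
theorem power_good_two_vars {K : Type*} [Field K]
    (I : Ideal (MvPolynomial (Fin 2) K)) (d : Fin 2 → ℕ)
    (hI : MPrimaryWithCorners I d) (hgood : IsGood I d) :
    ∀ k : ℕ, 1 ≤ k → IsGood (I ^ k) (fun i => k * d i) :=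
  power_good_two_vars_general I d hgood

end GasanovaRR
end

section
/- Let I = ⟨μ_1,…,μ_n⟩ = ⟨x_1^{d_1},…,x_n^{d_n}⟩ in K[x_1,…,x_n]. Then for every k ≥ 1, the power I^k is a good ideal if and only if I^k is a very good ideal (both notions taken with respect to the boxes associated to I^k). -/
open MvPolynomial

namespace GasanovaRR

/-
The minimal generators of `I^l` are the monomials `x^(c * d)` with `∑ c = l`, since `d > 0`
makes these exponents pairwise incomparable. Those of `(I^k)^l` lying in the box `a` are the
`x^(c * d)` with `a_i k ≤ c_i ≤ (a_i + 1) k`, and dividing by `x^(a k d)` turns them into exactly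
the `x^(c' * d)` with `∑ c' = k`, the minimal generators of `I^k`. So every `(I^k)_a` equals `I^k`,
and very good reduces to good.
-/

section PurePowers

variable {K : Type*} [Field K] {n : ℕ}

lemma mono_eq_prod_X (α : Fin n → ℕ) : mono K α = ∏ i, X i ^ α i := by
  rw [mono, monomial_eq, C_1, one_mul, Finsupp.prod_fintype _ _ (fun _ => pow_zero _)]
  rfl

lemma mono_zero : mono K (0 : Fin n → ℕ) = 1 := by
  simp [mono_eq_prod_X]

lemma mono_add (α β : Fin n → ℕ) : mono K (α + β) = mono K α * mono K β := by
  simp only [mono_eq_prod_X, Pi.add_apply, pow_add, Finset.prod_mul_distrib]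

lemma mono_single (i : Fin n) (e : ℕ) : mono K (Pi.single i e) = X i ^ e := by
  rw [mono_eq_prod_X, Fintype.prod_eq_single i fun j hj => by simp [hj], Pi.single_eq_same]

lemma mono_mul_eq_prod (c d : Fin n → ℕ) :
    mono K (c * d) = ∏ i, mono K (Pi.single i (d i)) ^ c i := by
  simp only [mono_single, ← pow_mul, mono_eq_prod_X (c * d), Pi.mul_apply, mul_comm]

variable (K) in
noncomputable def purePowerIdeal (d : Fin n → ℕ) : Ideal (MvPolynomial (Fin n) K) :=
  Ideal.span (Set.range fun i : Fin n => mono K (Pi.single i (d i)))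

lemma purePowerIdeal_pow_eq_span (d : Fin n → ℕ) (m : ℕ) :
    purePowerIdeal K d ^ m = Ideal.span ((fun c => mono K (c * d)) '' {c | ∑ i, c i = m}) := by
  refine le_antisymm ?_ (Ideal.span_le.mpr ?_)
  · induction m with
    | zero =>
      rw [pow_zero, Ideal.one_eq_top, top_le_iff, Ideal.eq_top_iff_one, ← mono_zero,
        ← zero_mul d]
      exact Ideal.subset_span ⟨0, by simp, rfl⟩
    | succ m ih =>
      rw [pow_succ, purePowerIdeal]
      refine (Ideal.mul_mono_left ih).trans ?_
      rw [Ideal.span_mul_span']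
      refine Ideal.span_mono ?_
      rintro _ ⟨_, ⟨c, hc, rfl⟩, _, ⟨i, rfl⟩, rfl⟩
      refine ⟨c + Pi.single i 1, ?_, ?_⟩
      · simp_all [Finset.sum_add_distrib]
      · dsimp only
        rw [add_mul, mono_add, ← Pi.single_mul_left, one_mul]
  · rintro _ ⟨c, hc : ∑ i, c i = m, rfl⟩
    change mono K (c * d) ∈ _
    rw [mono_mul_eq_prod, ← hc, ← Finset.prod_pow_eq_pow_sum]
    exact Ideal.prod_mem_prod fun i _ =>
      Ideal.pow_mem_pow (Ideal.subset_span (Set.mem_range_self i)) _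

lemma mono_mem_purePowerIdeal_pow_iff (d : Fin n → ℕ) (m : ℕ) (β : Fin n → ℕ) :
    mono K β ∈ purePowerIdeal K d ^ m ↔ ∃ c, ∑ i, c i = m ∧ c * d ≤ β := by
  have himg : (fun c => mono K (c * d)) '' {c | ∑ i, c i = m} =
      (fun s => monomial s (1 : K)) ''
        ((fun c => Finsupp.equivFunOnFinite.symm (c * d)) '' {c | ∑ i, c i = m}) := by
    rw [Set.image_image]; rfl
  classical
  rw [purePowerIdeal_pow_eq_span, himg, mono, mem_ideal_span_monomial_image, support_monomial,
    if_neg one_ne_zero]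
  simp [Finsupp.le_def, Pi.le_def]

lemma isMinGen_purePowerIdeal_pow_iff {d : Fin n → ℕ} (hd : ∀ i, 0 < d i) (m : ℕ)
    (α : Fin n → ℕ) :
    IsMinGen (purePowerIdeal K d ^ m) α ↔ ∃ c, ∑ i, c i = m ∧ α = c * d := by
  constructor
  · rintro ⟨hmem, hmin⟩
    obtain ⟨c, hc, hle⟩ := (mono_mem_purePowerIdeal_pow_iff d m α).mp hmem
    exact ⟨c, hc, (hmin _ ((mono_mem_purePowerIdeal_pow_iff d m _).mpr ⟨c, hc, le_rfl⟩) hle).symm⟩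
  · rintro ⟨c, rfl, rfl⟩
    refine ⟨(mono_mem_purePowerIdeal_pow_iff d _ _).mpr ⟨c, rfl, le_rfl⟩, fun β hβ hβle => ?_⟩
    obtain ⟨c', hc', hle'⟩ := (mono_mem_purePowerIdeal_pow_iff d _ β).mp hβ
    have hc'c : c' ≤ c := fun i => Nat.le_of_mul_le_mul_right ((hle' i).trans (hβle i)) (hd i)
    have hc'_eq : c' = c := funext fun i =>
      (Finset.sum_eq_sum_iff_of_le fun i _ => hc'c i).mp hc' i (Finset.mem_univ i)
    exact le_antisymm hβle (hc'_eq ▸ hle')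

lemma inBox_mul_iff {d : Fin n → ℕ} (hd : ∀ i, 0 < d i) (k : ℕ) (a c : Fin n → ℕ) :
    InBox (fun i => k * d i) a (c * d) ↔ InBox (fun _ => k) a c := by
  refine forall_congr' fun i => ?_
  simp only [Pi.mul_apply, ← mul_assoc, Nat.mul_le_mul_right_iff (hd i)]

theorem boxIdeal_purePowerIdeal_pow {d : Fin n → ℕ} (hd : ∀ i, 0 < d i) (k : ℕ)
    (a : Fin n → ℕ) :
    boxIdeal (purePowerIdeal K d ^ k) (fun i => k * d i) a = purePowerIdeal K d ^ k := by
  apply le_antisymm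
  · rw [boxIdeal, Ideal.span_le]
    rintro _ ⟨α, ⟨hbox, hmin⟩, rfl⟩
    rw [← pow_mul, isMinGen_purePowerIdeal_pow_iff hd] at hmin
    obtain ⟨c, hc, rfl⟩ := hmin
    rw [inBox_mul_iff hd] at hbox
    have hak : ∀ i, a i * k ≤ c i := fun i => (hbox i).1
    have hsub : c * d - (fun i => a i * (k * d i)) = (c - fun i => a i * k) * d := by
      funext i; simp [tsub_mul, mul_assoc]
    refine (mono_mem_purePowerIdeal_pow_iff d k _).mpr ⟨c - fun i => a i * k, ?_, hsub.ge⟩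
    simp only [Pi.sub_apply]
    rw [Finset.sum_tsub_distrib _ fun i _ => hak i, hc, ← Finset.sum_mul, mul_add_one, mul_comm,
      Nat.add_sub_cancel_left]
  · refine (purePowerIdeal_pow_eq_span d k).le.trans (Ideal.span_le.mpr ?_)
    rintro _ ⟨c, hc : ∑ i, c i = k, rfl⟩
    refine Ideal.subset_span ⟨(c + fun i => a i * k) * d, ⟨?_, ?_⟩, ?_⟩
    · rw [inBox_mul_iff hd]
      intro i
      have hck : c i ≤ k :=
        hc ▸ Finset.single_le_sum (fun j _ => Nat.zero_le (c j)) (Finset.mem_univ i)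
      simp only [Pi.add_apply]
      constructor <;> nlinarith
    · rw [← pow_mul, isMinGen_purePowerIdeal_pow_iff hd]
      refine ⟨_, ?_, rfl⟩
      simp only [Pi.add_apply, Finset.sum_add_distrib, hc, ← Finset.sum_mul]
      ring
    · change mono K (_ - _) = mono K (c * d)
      congr 1
      funext i
      simp [add_mul, mul_assoc]

end PurePowers

/-- Proposition 10.15: for `I = ⟨x_1^{d_1},…,x_n^{d_n}⟩` and every `k ≥ 1`, the
power `I^k` is good if and only if it is very good (both w.r.t. the boxes of
`I^k`, of sizes `k·d_i`). -/
theorem corner_power_good_iff_veryGood {K : Type*} [Field K] {n : ℕ}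
    (d : Fin n → ℕ) (hd : ∀ i, 0 < d i) :
    ∀ k : ℕ, 1 ≤ k →
      (IsGood ((Ideal.span (Set.range fun i : Fin n =>
          mono K (Pi.single i (d i)))) ^ k) (fun i => k * d i) ↔
       IsVeryGood ((Ideal.span (Set.range fun i : Fin n =>
          mono K (Pi.single i (d i)))) ^ k) (fun i => k * d i)) := by
  intro k _
  exact ⟨fun hgood => ⟨hgood, boxIdeal_purePowerIdeal_pow hd k⟩, And.left⟩

end GasanovaRR
end
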